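/- arXiv:2408.12552 — 5 statements merged into one kernel-verified Lean document; each statement's English description precedes it below -/
import Mathlib

section
/- If T is a contractive linear operator on (K[[x]], d), g ∈ K[[x]] with g(0) = 0, and f ∈ K[[x]], then g(T) is contractive and f(g(T)) = (f ∘ g)(T), where f ∘ g denotes formal composition of power series. -/
open PowerSeries Classical Finset

/-- The order `ω(f)` of a nonzero formal power series: the least `n` with `fₙ ≠ 0`. -/
noncomputable def worder {K : Type*} [Field K] (f : PowerSeries K) : ℕ :=
  sInf {n | PowerSeries.coeff n f ≠ 0}

/-- The distance `d(f,g) = 2^{-ω(f-g)}`, with `d(f,f) = 0`. -/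
noncomputable def wdist {K : Type*} [Field K] (f g : PowerSeries K) : ℝ :=
  if f = g then 0 else (2 : ℝ) ^ (-(worder (f - g) : ℤ))

/-- A self-map of `K[[x]]` is contractive if it is `c`-Lipschitz for `d` for some `c ∈ [0,1)`. -/
def IsContractive {K : Type*} [Field K] (S : PowerSeries K → PowerSeries K) : Prop :=
  ∃ c : ℝ, 0 ≤ c ∧ c < 1 ∧ ∀ f g : PowerSeries K, wdist (S f) (S g) ≤ c * wdist f g

/-- `S = f(T) = Σₙ fₙ Tⁿ`: for every `y`, the partial sums `Σ_{k<n} fₖ Tᵏ(y)` converge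
to `S y` in the metric `d`. -/
def IsOpSeries {K : Type*} [Field K] (f : PowerSeries K)
    (T S : Module.End K (PowerSeries K)) : Prop :=
  ∀ y : PowerSeries K, ∀ ε : ℝ, 0 < ε → ∃ N : ℕ, ∀ n ≥ N,
    wdist (∑ k ∈ Finset.range n, PowerSeries.coeff k f • (T ^ k) y) (S y) < ε

/-- Formal composition `f ∘ g` of power series (meaningful when `g(0) = 0`):
the `m`-th coefficient is `Σ_{n ≤ m} fₙ · [xᵐ](gⁿ)`. -/
noncomputable def pscomp {K : Type*} [Field K] (f g : PowerSeries K) : PowerSeries K :=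
  PowerSeries.mk fun m => ∑ n ∈ Finset.range (m + 1),
    PowerSeries.coeff n f * PowerSeries.coeff m (g ^ n)


/-!
A linear map is contractive for `d` exactly when it raises the `X`-adic order, since `d` only
takes the values `2⁻ⁿ`. For such `T` the `j`-th coefficient of `Σ fₖ Tᵏ y` only involves
`k ≤ j`, so `S = f(T)` means `S y ≡ (trunc n f)(T) y [mod Xⁿ]` for every `n`. In this form
`g(T)ᵏ = (gᵏ)(T)` follows from multiplicativity of truncations, hence `p(g(T)) = (p ∘ g)(T)` for
polynomials `p`, and `f ∘ g` agrees with `trunc n f ∘ g` modulo `Xⁿ` because `g(0) = 0`.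
-/

open Polynomial (aeval)

section Metric

variable {K : Type*} [Field K]

theorem worder_eq_toNat_order (f : K⟦X⟧) : worder f = f.order.toNat := by
  rcases eq_or_ne f 0 with rfl | hf
  · simp [worder]
  · rw [order, dif_neg hf, ENat.toNat_natCast, worder,
      Nat.sInf_def (s := {n | coeff n f ≠ 0}) (exists_coeff_ne_zero_iff_ne_zero.2 hf)]
    congr!

theorem X_pow_worder_dvd (f : K⟦X⟧) : X ^ worder f ∣ f := by
  rw [worder_eq_toNat_order]
  exact X_pow_order_dvd

theorem wdist_le_of_X_pow_dvd_sub {a b : K⟦X⟧} {n : ℕ} (h : X ^ n ∣ a - b) :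
    wdist a b ≤ 2 ^ (-(n : ℤ)) := by
  unfold wdist
  split_ifs with hab
  · positivity
  have hn : (n : ℕ∞) ≤ (a - b).order := nat_le_order _ _ (X_pow_dvd_iff.1 h)
  have hw : n ≤ worder (a - b) := by
    rw [worder_eq_toNat_order]
    simpa using ENat.toNat_le_toNat hn (order_eq_top.not.2 (sub_ne_zero.2 hab))
  exact zpow_le_zpow_right₀ one_le_two (by omega)

theorem X_pow_succ_dvd_sub_of_wdist_lt {a b : K⟦X⟧} {n : ℕ} (h : wdist a b < 2 ^ (-(n : ℤ))) :
    X ^ (n + 1) ∣ a - b := by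
  unfold wdist at h
  split_ifs at h with hab
  · simp [hab]
  have hw : n < worder (a - b) := by
    have := (zpow_lt_zpow_iff_right₀ one_lt_two).1 h
    omega
  exact (pow_dvd_pow X hw).trans (X_pow_worder_dvd _)

end Metric

def RaisesOrder {R : Type*} [CommRing R] (T : Module.End R R⟦X⟧) : Prop :=
  ∀ (n : ℕ) (z : R⟦X⟧), X ^ n ∣ z → X ^ (n + 1) ∣ T z

theorem isContractive_iff_raisesOrder {K : Type*} [Field K] (T : Module.End K K⟦X⟧) :
    IsContractive T ↔ RaisesOrder T := by
  constructor
  · rintro ⟨c, hc0, hc1, hc⟩ n z hz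
    have hlt : wdist (T z) (T 0) < 2 ^ (-(n : ℤ)) :=
      calc wdist (T z) (T 0) ≤ c * wdist z 0 := hc z 0
        _ ≤ c * 2 ^ (-(n : ℤ)) := by
          gcongr
          exact wdist_le_of_X_pow_dvd_sub (by simpa using hz)
        _ < 2 ^ (-(n : ℤ)) := mul_lt_of_lt_one_left (by positivity) hc1
    simpa using X_pow_succ_dvd_sub_of_wdist_lt hlt
  · intro hT
    refine ⟨1 / 2, by norm_num, by norm_num, fun a b => ?_⟩
    by_cases hab : a = b
    · simp [wdist, hab]
    have hdvd : X ^ (worder (a - b) + 1) ∣ T a - T b := by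
      rw [← map_sub]
      exact hT _ _ (X_pow_worder_dvd _)
    calc wdist (T a) (T b) ≤ 2 ^ (-((worder (a - b) + 1 : ℕ) : ℤ)) :=
          wdist_le_of_X_pow_dvd_sub hdvd
      _ = 1 / 2 * wdist a b := by
          rw [wdist, if_neg hab, Nat.cast_succ, neg_add, zpow_add₀ two_ne_zero]
          ring

namespace RaisesOrder

variable {R : Type*} [CommRing R] {T : Module.End R R⟦X⟧}

theorem X_pow_dvd_pow_apply (hT : RaisesOrder T) (k : ℕ) {n : ℕ} {z : R⟦X⟧} (hz : X ^ n ∣ z) :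
    X ^ (n + k) ∣ (T ^ k) z := by
  induction k with
  | zero => simpa using hz
  | succ k ih =>
    rw [pow_succ', Module.End.mul_apply, ← add_assoc]
    exact hT _ _ ih

theorem X_pow_dvd_aeval_apply (hT : RaisesOrder T) (p : Polynomial R) {n : ℕ} {z : R⟦X⟧}
    (hz : X ^ n ∣ z) : X ^ n ∣ aeval T p z := by
  rw [Polynomial.aeval_eq_sum_range, LinearMap.sum_apply]
  refine Finset.dvd_sum fun k _ => ?_
  rw [LinearMap.smul_apply]
  refine dvd_smul_of_dvd _ ?_
  exact (pow_dvd_pow X (Nat.le_add_right n k)).trans (hT.X_pow_dvd_pow_apply k hz)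

theorem X_pow_add_dvd_aeval_apply (hT : RaisesOrder T) {m n : ℕ} {p : Polynomial R}
    (hp : Polynomial.X ^ m ∣ p) {z : R⟦X⟧} (hz : X ^ n ∣ z) : X ^ (n + m) ∣ aeval T p z := by
  obtain ⟨q, rfl⟩ := hp
  rw [map_mul, map_pow, Polynomial.aeval_X, Module.End.mul_apply]
  exact hT.X_pow_dvd_pow_apply m (hT.X_pow_dvd_aeval_apply q hz)

theorem X_pow_dvd_aeval_sub_aeval (hT : RaisesOrder T) {n : ℕ} {p q : Polynomial R}
    (h : trunc n (p : R⟦X⟧) = trunc n (q : R⟦X⟧)) (y : R⟦X⟧) :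
    X ^ n ∣ aeval T p y - aeval T q y := by
  have hpq : Polynomial.X ^ n ∣ p - q := by
    refine Polynomial.X_pow_dvd_iff.2 fun d hd => ?_
    simpa [coeff_trunc, hd, sub_eq_zero] using congrArg (Polynomial.coeff · d) h
  simpa [← LinearMap.sub_apply] using
    hT.X_pow_add_dvd_aeval_apply hpq (n := 0) (z := y) (by simp)

end RaisesOrder

theorem aeval_trunc {R A : Type*} [CommSemiring R] [Semiring A] [Algebra R A] (a : A)
    (f : R⟦X⟧) (n : ℕ) : aeval a (trunc n f) = ∑ k ∈ Finset.range n, coeff k f • a ^ k := by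
  induction n with
  | zero => simp
  | succ n ih =>
    rw [trunc_succ, map_add, ih, Finset.sum_range_succ, Polynomial.aeval_monomial,
      Algebra.smul_def]

section OpSeries

variable {K : Type*} [Field K] {f g : K⟦X⟧} {T S : Module.End K K⟦X⟧}

theorem isOpSeries_iff (hT : RaisesOrder T) :
    IsOpSeries f T S ↔ ∀ (n : ℕ) (y : K⟦X⟧), X ^ n ∣ S y - aeval T (trunc n f) y := by
  have hsum : ∀ n y, ∑ k ∈ Finset.range n, coeff k f • (T ^ k) y = aeval T (trunc n f) y := by
    simp [aeval_trunc, LinearMap.sum_apply]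
  simp only [IsOpSeries, hsum]
  constructor
  · intro h n y
    obtain ⟨N, hN⟩ := h y (2 ^ (-(n : ℤ))) (by positivity)
    have hS : X ^ (n + 1) ∣ aeval T (trunc (max N n) f) y - S y :=
      X_pow_succ_dvd_sub_of_wdist_lt (hN _ (le_max_left N n))
    have htrunc : X ^ n ∣ aeval T (trunc (max N n) f) y - aeval T (trunc n f) y :=
      hT.X_pow_dvd_aeval_sub_aeval (by rw [trunc_trunc_of_le f (le_max_right N n), trunc_trunc]) y
    rw [← sub_sub_sub_cancel_left _ _ (aeval T (trunc (max N n) f) y)]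
    exact dvd_sub htrunc ((pow_dvd_pow X n.le_succ).trans hS)
  · intro h y ε hε
    obtain ⟨N, hN⟩ := exists_pow_lt_of_lt_one hε one_half_lt_one
    refine ⟨N, fun n hn => ?_⟩
    calc wdist (aeval T (trunc n f) y) (S y) ≤ 2 ^ (-(n : ℤ)) :=
          wdist_le_of_X_pow_dvd_sub (by simpa using (h n y).neg_right)
      _ ≤ 2 ^ (-(N : ℤ)) := zpow_le_zpow_right₀ one_le_two (by omega)
      _ = (1 / 2) ^ N := by rw [zpow_neg, zpow_natCast, one_div, inv_pow]
      _ < ε := hN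

theorem IsOpSeries.X_pow_dvd_apply (hT : RaisesOrder T) (hS : IsOpSeries f T S) {n : ℕ}
    {z : K⟦X⟧} (hz : X ^ n ∣ z) : X ^ n ∣ S z := by
  rw [← sub_add_cancel (S z) (aeval T (trunc n f) z)]
  exact dvd_add ((isOpSeries_iff hT).1 hS n z) (hT.X_pow_dvd_aeval_apply _ hz)

theorem IsOpSeries.raisesOrder (hT : RaisesOrder T) (hf0 : constantCoeff f = 0)
    (hS : IsOpSeries f T S) : RaisesOrder S := by
  intro n z hz
  have hX : Polynomial.X ^ 1 ∣ trunc (n + 1) f := by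
    rw [pow_one, Polynomial.X_dvd_iff, coeff_trunc, if_pos n.succ_pos,
      coeff_zero_eq_constantCoeff_apply, hf0]
  rw [← sub_add_cancel (S z) (aeval T (trunc (n + 1) f) z)]
  exact dvd_add ((isOpSeries_iff hT).1 hS (n + 1) z) (hT.X_pow_add_dvd_aeval_apply hX hz)

theorem IsOpSeries.pow (hT : RaisesOrder T) (hS : IsOpSeries g T S) (k : ℕ) :
    IsOpSeries (g ^ k) T (S ^ k) := by
  rw [isOpSeries_iff hT]
  intro n y
  induction k with
  | zero => simpa using hT.X_pow_dvd_aeval_sub_aeval (p := 1) (q := trunc n 1) (by simp) y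
  | succ k ih =>
    set w := aeval T (trunc n (g ^ k)) y
    have hmul : X ^ n ∣ aeval T (trunc n g) w - aeval T (trunc n (g ^ (k + 1))) y := by
      rw [← Module.End.mul_apply, ← map_mul]
      refine hT.X_pow_dvd_aeval_sub_aeval ?_ y
      rw [Polynomial.coe_mul, trunc_trunc_mul_trunc, trunc_trunc, pow_succ']
    set A := aeval T (trunc n g) w
    set B := aeval T (trunc n (g ^ (k + 1))) y
    have hsplit : S ((S ^ k) y) - B = S ((S ^ k) y - w) + (S w - A) + (A - B) := by
      rw [map_sub]
      abel
    rw [pow_succ', Module.End.mul_apply, hsplit]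
    refine dvd_add (dvd_add ?_ ((isOpSeries_iff hT).1 hS n w)) hmul
    exact IsOpSeries.X_pow_dvd_apply hT hS ih

theorem IsOpSeries.aeval (hT : RaisesOrder T) (hS : IsOpSeries g T S) (p : Polynomial K) :
    IsOpSeries (aeval g p) T (aeval S p) := by
  rw [isOpSeries_iff hT]
  intro n y
  rw [Polynomial.aeval_eq_sum_range (x := S), Polynomial.aeval_eq_sum_range (x := g)]
  simp only [map_sum, map_smul, LinearMap.sum_apply, LinearMap.smul_apply,
    ← Finset.sum_sub_distrib, ← smul_sub]
  exact Finset.dvd_sum fun k _ =>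
    dvd_smul_of_dvd _ ((isOpSeries_iff hT).1 (IsOpSeries.pow hT hS k) n y)

end OpSeries

theorem coeff_pow_eq_zero_of_lt {R : Type*} [CommSemiring R] {g : R⟦X⟧}
    (hg0 : constantCoeff g = 0) {m k : ℕ} (hmk : m < k) : coeff m (g ^ k) = 0 :=
  X_pow_dvd_iff.1 (pow_dvd_pow_of_dvd (X_dvd_iff.2 hg0) k) m hmk

theorem trunc_pscomp {K : Type*} [Field K] {g : K⟦X⟧} (hg0 : constantCoeff g = 0)
    (f : K⟦X⟧) (n : ℕ) : trunc n (pscomp f g) = trunc n (aeval g (trunc n f)) := by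
  ext m
  rw [coeff_trunc, coeff_trunc]
  split_ifs with hm
  · rw [pscomp, coeff_mk, aeval_trunc, map_sum]
    simp only [coeff_smul, smul_eq_mul]
    refine Finset.sum_subset (Finset.range_subset_range.2 hm) fun k hk hkm => ?_
    rw [coeff_pow_eq_zero_of_lt hg0 (by simpa using hkm), mul_zero]
  · rfl

theorem opSeries_subst_general {K : Type*} [Field K]
    (f g : PowerSeries K) (T : Module.End K (PowerSeries K))
    (hT : IsContractive (T : PowerSeries K → PowerSeries K))
    (hg0 : PowerSeries.constantCoeff g = 0) :
    ∀ Sg : Module.End K (PowerSeries K), IsOpSeries g T Sg →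
      IsContractive (Sg : PowerSeries K → PowerSeries K) ∧
        ∀ S : Module.End K (PowerSeries K),
          (IsOpSeries f Sg S ↔ IsOpSeries (pscomp f g) T S) := by
  intro Sg hSg
  have hTr : RaisesOrder T := (isContractive_iff_raisesOrder T).1 hT
  have hSgr : RaisesOrder Sg := IsOpSeries.raisesOrder hTr hg0 hSg
  refine ⟨(isContractive_iff_raisesOrder Sg).2 hSgr, fun S => ?_⟩
  rw [isOpSeries_iff hSgr, isOpSeries_iff hTr]
  refine forall₂_congr fun n y => ?_
  have hcomp : X ^ n ∣ aeval Sg (trunc n f) y - aeval T (trunc n (pscomp f g)) y := by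
    rw [trunc_pscomp hg0]
    exact (isOpSeries_iff hTr).1 (IsOpSeries.aeval hTr hSg _) n y
  rw [← sub_add_sub_cancel (S y) _ (aeval T (trunc n (pscomp f g)) y), dvd_add_left hcomp]

/-- If `T` is a contractive linear operator on `(K[[x]], d)`,
`g(0) = 0` and `f ∈ K[[x]]`, then `g(T)` is contractive and `f(g(T)) = (f ∘ g)(T)`:
any `Sg` with `Sg = g(T)` is contractive, and an operator `S` equals `f(Sg)`
iff it equals `(f ∘ g)(T)`. -/
theorem opSeries_subst {K : Type*} [Field K] [CharZero K]
    (f g : PowerSeries K) (T : Module.End K (PowerSeries K))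
    (hT : IsContractive (T : PowerSeries K → PowerSeries K))
    (hg0 : PowerSeries.constantCoeff g = 0) :
    ∀ Sg : Module.End K (PowerSeries K), IsOpSeries g T Sg →
      IsContractive (Sg : PowerSeries K → PowerSeries K) ∧
        ∀ S : Module.End K (PowerSeries K),
          (IsOpSeries f Sg S ↔ IsOpSeries (pscomp f g) T S) :=
  opSeries_subst_general f g T hT hg0
end

section
/- Let G : K[[x]] → K[[x]] be non-expansive with respect to the ultrametric d and y₀ ∈ K. Then the initial value problem D_h(y) = G(y), y(0) = y₀ has a unique solution y ∈ K[[x]]; moreover y is the unique fixed point of the map F(f) = y₀ + I_h(G(f)), which is 1/2-contractive. -/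
/-!
The map `F f = y₀ + I_h(G f)` raises agreement of coefficients by one: if `f` and `g`
agree below degree `n`, so do `G f` and `G g` (non-expansiveness), and integration shifts this to
agreement of `F f` and `F g` below degree `n + 1`. This is the coefficientwise form of
`1/2`-contractivity, and it makes the iterates `Fᵐ(0)` stabilise degree by degree to the unique
fixed point. Since all `hₖ ≠ 0`, `D_h` and `I_h` are mutually inverse up to the constant term, so
the fixed points of `F` are exactly the solutions of the initial value problem.
-/

open PowerSeries Classical Finset

/-- The Ward `h`-derivative: `D_h(Σ sₖxᵏ) = Σ_{k≥1} hₖ sₖ x^{k-1}`. -/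
noncomputable def Dh {K : Type*} [Field K] (h s : PowerSeries K) : PowerSeries K :=
  PowerSeries.mk fun k =>
    PowerSeries.coeff (k + 1) h * PowerSeries.coeff (k + 1) s

/-- The Ward `h`-integral: `I_h(Σ sₖxᵏ) = Σ_{k≥0} (sₖ/h_{k+1}) x^{k+1}`. -/
noncomputable def Ih {K : Type*} [Field K] (h s : PowerSeries K) : PowerSeries K :=
  PowerSeries.mk fun k =>
    if k = 0 then 0 else PowerSeries.coeff (k - 1) s / PowerSeries.coeff k h

def AgreeBelow {R : Type*} [Semiring R] (n : ℕ) (f g : R⟦X⟧) : Prop :=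
  ∀ j < n, coeff j f = coeff j g

section FixedPoint

variable {R : Type*} [Semiring R] {F : R⟦X⟧ → R⟦X⟧}

lemma agreeBelow_iterate (hF : ∀ n f g, AgreeBelow n f g → AgreeBelow (n + 1) (F f) (F g))
    (x : R⟦X⟧) (m k : ℕ) : AgreeBelow m (F^[m] x) (F^[m + k] x) := by
  induction m with
  | zero => exact fun j hj => absurd hj j.not_lt_zero
  | succ m ih =>
    rw [Function.iterate_succ_apply', Nat.add_right_comm, Function.iterate_succ_apply']
    exact hF m _ _ ih

lemma existsUnique_fixedPoint_of_agreeBelow_succ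
    (hF : ∀ n f g, AgreeBelow n f g → AgreeBelow (n + 1) (F f) (F g)) :
    ∃! y, F y = y := by
  let y : R⟦X⟧ := mk fun j => coeff j (F^[j + 1] 0)
  have hy : ∀ k, AgreeBelow (k + 1) y (F^[k + 1] 0) := by
    intro k j hj
    obtain ⟨i, rfl⟩ := Nat.exists_eq_add_of_le (Nat.le_of_lt_succ hj)
    rw [coeff_mk, Nat.add_right_comm]
    exact agreeBelow_iterate hF 0 (j + 1) i j j.lt_succ_self
  have hfix : F y = y := by
    ext k
    calc coeff k (F y) = coeff k (F^[k + 2] 0) := by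
          rw [Function.iterate_succ_apply']; exact hF _ _ _ (hy k) k (by omega)
      _ = coeff k (F^[k + 1] 0) := (agreeBelow_iterate hF 0 (k + 1) 1 k k.lt_succ_self).symm
      _ = coeff k y := (hy k k k.lt_succ_self).symm
  refine ⟨y, hfix, fun z (hz : F z = z) => ?_⟩
  have hzy : ∀ n, AgreeBelow n z y := by
    intro n
    induction n with
    | zero => exact fun j hj => absurd hj j.not_lt_zero
    | succ n ih => simpa only [hz, hfix] using hF n z y ih
  ext k
  exact hzy (k + 1) k k.lt_succ_self

end FixedPoint

section Ward

variable {K : Type*} [Field K]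

lemma wdist_le_two_zpow_iff (f g : K⟦X⟧) (n : ℕ) :
    wdist f g ≤ 2 ^ (-(n : ℤ)) ↔ AgreeBelow n f g := by
  by_cases hfg : f = g
  · simp only [hfg, wdist, if_true]
    exact iff_of_true (by positivity) fun _ _ => rfl
  have hne : {j | coeff j (f - g) ≠ 0}.Nonempty :=
    exists_coeff_ne_zero_iff_ne_zero.2 (sub_ne_zero.2 hfg)
  rw [wdist, if_neg hfg, zpow_le_zpow_iff_right₀ one_lt_two, neg_le_neg_iff, Nat.cast_le,
    worder, le_csInf_iff' hne]
  refine forall_congr' fun j => ?_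
  simp only [Set.mem_ofPred_eq, map_sub, sub_ne_zero, ← not_lt, not_imp_comm, not_not]

lemma wdist_le_half_mul_of_agreeBelow_succ {F : K⟦X⟧ → K⟦X⟧}
    (hF : ∀ n f g, AgreeBelow n f g → AgreeBelow (n + 1) (F f) (F g)) (f g : K⟦X⟧) :
    wdist (F f) (F g) ≤ 1 / 2 * wdist f g := by
  by_cases hfg : f = g
  · simp [hfg, wdist]
  have hd : wdist f g = 2 ^ (-(worder (f - g) : ℤ)) := if_neg hfg
  have hagree := (wdist_le_two_zpow_iff f g _).1 hd.le
  calc wdist (F f) (F g) ≤ 2 ^ (-((worder (f - g) + 1 : ℕ) : ℤ)) :=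
        (wdist_le_two_zpow_iff _ _ _).2 (hF _ f g hagree)
    _ = 1 / 2 * wdist f g := by
        rw [hd, Nat.cast_succ, neg_add, zpow_add₀ two_ne_zero]; norm_num [mul_comm]

lemma coeff_dh (h s : K⟦X⟧) (k : ℕ) : coeff k (Dh h s) = coeff (k + 1) h * coeff (k + 1) s :=
  coeff_mk _ _

lemma coeff_zero_C_add_ih (h s : K⟦X⟧) (y₀ : K) : coeff 0 (C y₀ + Ih h s) = y₀ := by
  simp [Ih]

lemma coeff_succ_C_add_ih (h s : K⟦X⟧) (y₀ : K) (k : ℕ) :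
    coeff (k + 1) (C y₀ + Ih h s) = coeff k s / coeff (k + 1) h := by
  simp [Ih]

lemma agreeBelow_succ_C_add_ih {h s t : K⟦X⟧} {n : ℕ} (y₀ : K) (hst : AgreeBelow n s t) :
    AgreeBelow (n + 1) (C y₀ + Ih h s) (C y₀ + Ih h t)
  | 0, _ => by rw [coeff_zero_C_add_ih, coeff_zero_C_add_ih]
  | j + 1, hj => by rw [coeff_succ_C_add_ih, coeff_succ_C_add_ih, hst j (by omega)]

lemma dh_eq_and_constantCoeff_eq_iff {h : K⟦X⟧} (hne : ∀ k : ℕ, 1 ≤ k → coeff k h ≠ 0)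
    (y g : K⟦X⟧) (y₀ : K) :
    (Dh h y = g ∧ constantCoeff y = y₀) ↔ C y₀ + Ih h g = y := by
  have hne' : ∀ k, coeff (k + 1) h ≠ 0 := fun k => hne (k + 1) k.succ_pos
  constructor
  · rintro ⟨rfl, rfl⟩
    ext (_ | k)
    · simp [coeff_zero_C_add_ih]
    · rw [coeff_succ_C_add_ih, coeff_dh, mul_div_cancel_left₀ _ (hne' k)]
  · rintro rfl
    refine ⟨ext fun k => ?_, by simpa using coeff_zero_C_add_ih h g y₀⟩
    rw [coeff_dh, coeff_succ_C_add_ih, mul_div_cancel₀ _ (hne' k)]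

end Ward

theorem ivp_unique_solution_general {K : Type*} [Field K]
    (h : PowerSeries K)
    (hne : ∀ k : ℕ, 1 ≤ k → PowerSeries.coeff k h ≠ 0)
    (G : PowerSeries K → PowerSeries K)
    (hG : ∀ f g : PowerSeries K, wdist (G f) (G g) ≤ wdist f g)
    (y₀ : K) :
    (∃! y : PowerSeries K, Dh h y = G y ∧ PowerSeries.constantCoeff y = y₀) ∧
    (∀ y : PowerSeries K,
      (Dh h y = G y ∧ PowerSeries.constantCoeff y = y₀) ↔
        PowerSeries.C y₀ + Ih h (G y) = y) ∧
    (∀ f g : PowerSeries K,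
      wdist (PowerSeries.C y₀ + Ih h (G f)) (PowerSeries.C y₀ + Ih h (G g)) ≤
        (1 / 2) * wdist f g) := by
  have hF : ∀ n f g, AgreeBelow n f g →
      AgreeBelow (n + 1) (C y₀ + Ih h (G f)) (C y₀ + Ih h (G g)) := fun n f g hfg =>
    agreeBelow_succ_C_add_ih y₀ <| (wdist_le_two_zpow_iff _ _ n).1 <|
      (hG f g).trans ((wdist_le_two_zpow_iff f g n).2 hfg)
  have hivp : ∀ y, (Dh h y = G y ∧ constantCoeff y = y₀) ↔ C y₀ + Ih h (G y) = y :=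
    fun y => dh_eq_and_constantCoeff_eq_iff hne y (G y) y₀
  exact ⟨(existsUnique_congr hivp).2 (existsUnique_fixedPoint_of_agreeBelow_succ hF), hivp,
    wdist_le_half_mul_of_agreeBelow_succ hF⟩

/-- If `G : K[[x]] → K[[x]]` is non-expansive for `d` and `y₀ ∈ K`,
then the IVP `D_h(y) = G(y)`, `y(0) = y₀` has a unique solution `y ∈ K[[x]]`; moreover
the solutions of the IVP are exactly the fixed points of `F(f) = y₀ + I_h(G(f))`,
and `F` is `1/2`-contractive. -/
theorem ivp_unique_solution {K : Type*} [Field K] [CharZero K]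
    (h : PowerSeries K)
    (h0 : PowerSeries.constantCoeff h = 0)
    (hne : ∀ k : ℕ, 1 ≤ k → PowerSeries.coeff k h ≠ 0)
    (G : PowerSeries K → PowerSeries K)
    (hG : ∀ f g : PowerSeries K, wdist (G f) (G g) ≤ wdist f g)
    (y₀ : K) :
    (∃! y : PowerSeries K, Dh h y = G y ∧ PowerSeries.constantCoeff y = y₀) ∧
    (∀ y : PowerSeries K,
      (Dh h y = G y ∧ PowerSeries.constantCoeff y = y₀) ↔
        PowerSeries.C y₀ + Ih h (G y) = y) ∧
    (∀ f g : PowerSeries K,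
      wdist (PowerSeries.C y₀ + Ih h (G f)) (PowerSeries.C y₀ + Ih h (G g)) ≤
        (1 / 2) * wdist f g) :=
  ivp_unique_solution_general h hne G hG y₀
end

section
/- For any positive integer s and any formal power series y ∈ K[[x]], the derivative associated to h_s(x) = x/(1-x)^s satisfies D_{h_s}(y) = Σ_{k=0}^{s-1} binom(s-1,k) (x^k/k!) (D₀(y))^{(k)}, where (·)^{(k)} denotes the k-th usual derivative. -/
/-! Compare coefficients of `xⁿ`. On the left it is `binom(s-1+n, s-1) y_{n+1}`. On the right,
`xᵏ dᵏ/dxᵏ` multiplies `xⁿ` by the falling factorial `n(n-1)⋯(n-k+1) = k! binom(n,k)`, so the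
`k`-th summand contributes `binom(s-1,k) binom(n,k) y_{n+1}`, and Vandermonde's identity
`Σₖ binom(s-1,k) binom(n,k) = binom(s-1+n, s-1)` finishes the proof. -/

open PowerSeries Classical Finset

/-- The 0-Jackson derivative: `D₀(Σ sₖxᵏ) = Σ_{k≥1} sₖ x^{k-1}`. -/
noncomputable def D0 {K : Type*} [Field K] (s : PowerSeries K) : PowerSeries K :=
  PowerSeries.mk fun k => PowerSeries.coeff (k + 1) s

theorem Nat.sum_range_choose_mul_choose (m n : ℕ) :
    ∑ k ∈ range (m + 1), m.choose k * n.choose k = (m + n).choose m := by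
  rw [Nat.add_choose_eq, Nat.sum_antidiagonal_eq_sum_range_succ_mk, ← sum_range_reflect]
  refine sum_congr rfl fun k hk => ?_
  rw [Nat.add_sub_cancel, Nat.choose_symm (Nat.le_of_lt_succ (mem_range.1 hk))]

namespace PowerSeries

theorem inv_one_sub_pow_eq_mk_choose {K : Type*} [Field K] (d : ℕ) :
    (1 - X : K⟦X⟧)⁻¹ ^ (d + 1) = mk fun n => ((d + n).choose d : K) := by
  rw [(inv_eq_iff_mul_eq_one (by simp)).2 (mk_one_mul_one_sub_eq_one K),
    mk_one_pow_eq_mk_choose_add]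

theorem coeff_X_pow_mul_iterate_derivative {R : Type*} [CommSemiring R]
    (f : R⟦X⟧) (k n : ℕ) :
    coeff n (X ^ k * (d⁄dX R)^[k] f) = n.descFactorial k * coeff n f := by
  rw [coeff_X_pow_mul']
  split_ifs with hkn
  · obtain ⟨m, rfl⟩ := Nat.exists_eq_add_of_le' hkn
    rw [Nat.add_sub_cancel, coeff_iterate_derivative, Nat.add_descFactorial_eq_ascFactorial]
  · rw [Nat.descFactorial_eq_zero_iff_lt.2 (by lia), Nat.cast_zero, zero_mul]

theorem coeff_smul_X_pow_mul_iterate_derivative {K : Type*} [Field K] [CharZero K]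
    (f : K⟦X⟧) (k n : ℕ) :
    coeff n ((k.factorial : K)⁻¹ • (X ^ k * (d⁄dX K)^[k] f)) = n.choose k * coeff n f := by
  rw [coeff_smul, coeff_X_pow_mul_iterate_derivative, Nat.descFactorial_eq_factorial_mul_choose,
    smul_eq_mul, Nat.cast_mul, mul_assoc,
    inv_mul_cancel_left₀ (Nat.cast_ne_zero.2 k.factorial_ne_zero)]

end PowerSeries

/-- For any positive integer `s` and any `y ∈ K[[x]]`, the derivative
associated to `h_s(x) = x/(1-x)^s` satisfies
`D_{h_s}(y) = Σ_{k=0}^{s-1} C(s-1,k) (xᵏ/k!) (D₀(y))⁽ᵏ⁾`,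
where `⁽ᵏ⁾` is the `k`-th usual derivative. -/
theorem Dh_pascal_column {K : Type*} [Field K] [CharZero K]
    (s : ℕ) (hs : 1 ≤ s) (y : PowerSeries K) :
    Dh (PowerSeries.X * ((1 - PowerSeries.X : PowerSeries K)⁻¹) ^ s) y =
      ∑ k ∈ Finset.range s,
        (((s - 1).choose k : K) / (k.factorial : K)) •
          (PowerSeries.X ^ k * PowerSeries.derivativeFun^[k] (D0 y)) := by
  obtain ⟨t, rfl⟩ := Nat.exists_eq_add_of_le' hs
  rw [show (derivativeFun : K⟦X⟧ → K⟦X⟧) = d⁄dX K from rfl]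
  have hterm (n k : ℕ) : coeff n (((t.choose k : K) / k.factorial) •
      (X ^ k * (d⁄dX K)^[k] (D0 y))) = (t.choose k * n.choose k : ℕ) * coeff (n + 1) y := by
    rw [div_eq_mul_inv, mul_smul, coeff_smul, smul_eq_mul,
      coeff_smul_X_pow_mul_iterate_derivative (D0 y), D0, coeff_mk, Nat.cast_mul, mul_assoc]
  ext n
  rw [Dh, coeff_mk, coeff_succ_X_mul, inv_one_sub_pow_eq_mk_choose, coeff_mk, Nat.add_sub_cancel,
    map_sum, sum_congr rfl fun k _ => hterm n k, ← sum_mul, ← Nat.cast_sum,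
    Nat.sum_range_choose_mul_choose]
end

section
/- For any integer s ≥ 2 and any formal power series y ∈ K[[x]], D_{h_s}(y) = Σ_{k=1}^{s-1} (1/k!) binom(s-2,k-1) x^{k-1} y^{(k)}, where y^{(k)} is the k-th usual derivative of y. -/
/-!
Compare coefficients of `xⁿ`. On the left, the coefficient of `x^{n+1}` in
`x/(1-x)^s` is `C(s-1+n, s-1)`. On the right, `x^{k-1} y⁽ᵏ⁾ / k!` contributes
`C(n+1, k) y_{n+1}`. What remains is Vandermonde's convolution
`∑ₖ C(s-2, k-1) C(n+1, k) = C(s-2 + n+1, s-1)`.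
-/

open PowerSeries Classical Finset

theorem Nat.sum_Icc_choose_pred_mul_choose (d m : ℕ) :
    ∑ k ∈ Icc 1 (d + 1), d.choose (k - 1) * m.choose k = (d + m).choose (d + 1) := by
  rw [Nat.add_choose_eq, ← Finset.Nat.sum_antidiagonal_swap]
  simp only [Prod.fst_swap, Prod.snd_swap]
  rw [Finset.Nat.sum_antidiagonal_eq_sum_range_succ (fun i j => d.choose j * m.choose i),
    sum_range_succ', Nat.sub_zero, Nat.choose_succ_self, zero_mul, add_zero,
    ← Ico_add_one_right_eq_Icc, sum_Ico_eq_sum_range, Nat.add_sub_cancel]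
  refine sum_congr rfl fun k hk => ?_
  rw [add_comm 1 k, Nat.add_sub_cancel, Nat.add_sub_add_right,
    Nat.choose_symm (Nat.lt_succ_iff.mp (mem_range.mp hk))]

namespace PowerSeries

theorem derivativeFun_eq_derivative {R : Type*} [CommSemiring R] :
    (derivativeFun : R⟦X⟧ → R⟦X⟧) = d⁄dX R :=
  rfl

theorem inv_one_sub_X {K : Type*} [Field K] : (1 - X : K⟦X⟧)⁻¹ = mk 1 :=
  (inv_eq_iff_mul_eq_one (by simp)).mpr (mk_one_mul_one_sub_eq_one K)

theorem coeff_succ_X_mul_inv_one_sub_X_pow {K : Type*} [Field K] (d n : ℕ) :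
    coeff (n + 1) (X * (1 - X : K⟦X⟧)⁻¹ ^ (d + 1)) = ((d + n).choose d : K) := by
  rw [coeff_succ_X_mul, inv_one_sub_X, mk_one_pow_eq_mk_choose_add, coeff_mk]

theorem coeff_X_pow_pred_mul_iterate_derivative {R : Type*} [CommSemiring R] (f : R⟦X⟧)
    {k : ℕ} (hk : 1 ≤ k) (n : ℕ) :
    coeff n (X ^ (k - 1) * (d⁄dX R)^[k] f) = (n + 1).descFactorial k * coeff (n + 1) f := by
  rw [coeff_X_pow_mul']
  split_ifs with h
  · rw [coeff_iterate_derivative, ← Nat.add_descFactorial_eq_ascFactorial,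
      show n - (k - 1) + k = n + 1 by omega]
  · rw [Nat.descFactorial_eq_zero_iff_lt.mpr (by omega), Nat.cast_zero, zero_mul]

end PowerSeries

/-- For any integer `s ≥ 2` and any `y ∈ K[[x]]`,
`D_{h_s}(y) = Σ_{k=1}^{s-1} (1/k!) C(s-2,k-1) x^{k-1} y⁽ᵏ⁾`, where `h_s(x) = x/(1-x)^s`
and `y⁽ᵏ⁾` is the `k`-th usual derivative of `y`. -/
theorem Dh_pascal_column_finite {K : Type*} [Field K] [CharZero K]
    (s : ℕ) (hs : 2 ≤ s) (y : PowerSeries K) :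
    Dh (PowerSeries.X * ((1 - PowerSeries.X : PowerSeries K)⁻¹) ^ s) y =
      ∑ k ∈ Finset.Icc 1 (s - 1),
        ((1 : K) / (k.factorial : K) * ((s - 2).choose (k - 1) : K)) •
          (PowerSeries.X ^ (k - 1) * PowerSeries.derivativeFun^[k] y) := by
  obtain ⟨d, rfl⟩ : ∃ d, s = d + 2 := ⟨s - 2, by omega⟩
  simp only [derivativeFun_eq_derivative, Nat.add_sub_cancel, show d + 2 - 1 = d + 1 from rfl]
  ext n
  have hterm : ∀ k ∈ Icc 1 (d + 1),
      coeff n (((1 : K) / k.factorial * d.choose (k - 1)) • (X ^ (k - 1) * (d⁄dX K)^[k] y)) =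
        (d.choose (k - 1) * (n + 1).choose k : ℕ) * coeff (n + 1) y := by
    intro k hk
    rw [coeff_smul, smul_eq_mul, coeff_X_pow_pred_mul_iterate_derivative y (mem_Icc.mp hk).1,
      Nat.descFactorial_eq_factorial_mul_choose]
    push_cast
    field_simp [k.factorial_ne_zero]
  rw [Dh, coeff_mk, coeff_succ_X_mul_inv_one_sub_X_pow, map_sum, sum_congr rfl hterm, ← sum_mul,
    ← Nat.cast_sum, Nat.sum_Icc_choose_pred_mul_choose, ← add_assoc, Nat.add_right_comm d n 1]
end

section
/- Sheffer expansion coefficients for Ward derivatives: let h = Σ_{k≥1} hₖxᵏ with hₖ ≠ 0 for all k ≥ 1, and define Lₖʰ by D_h(y) = Σ_{j≥1} Lⱼʰ(x) y^{(j)} for all y (where y^{(j)} is the usual j-th derivative). Then Lₖʰ(x) = (x^{k-1}/k!) Σ_{j=0}^{k} (−1)^{k+j} binom(k,j) hⱼ for all k ≥ 1 (with h₀ = 0). Equivalently, D_h(xⁿ) evaluated via this expansion gives hₙx^{n−1}: hₙ x^{n-1} = Σ_{j=1}^{n} binom(n,j) j! Lⱼʰ(x) x^{n−j}. -/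
/-!
The recurrence is triangular with diagonal coefficient `n!`, so it has at most one solution
(Sheffer's lemma). The scalar `Σⱼ (-1)^(k+j) C(k,j) hⱼ` is the `k`-th forward difference
`Δᵏh(0)`, and the closed form solves the recurrence by the Gregory–Newton formula
`h(n) = Σₖ C(n,k) Δᵏh(0)`, whose `k = 0` term is `h₀ = 0`.
-/

open PowerSeries Finset

theorem fwdDiff_iter_eq_sum_neg_one_pow_add {R : Type*} [CommRing R] (f : ℕ → R) (k : ℕ) :
    (fwdDiff 1)^[k] f 0 = ∑ j ∈ range (k + 1), (-1 : R) ^ (k + j) * (k.choose j : R) * f j := by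
  rw [fwdDiff_iter_eq_sum_shift]
  refine sum_congr rfl fun j hj => ?_
  have hjk : j ≤ k := Nat.lt_succ_iff.mp (mem_range.mp hj)
  obtain ⟨i, rfl⟩ := Nat.exists_eq_add_of_le hjk
  rw [zsmul_eq_mul, Nat.add_sub_cancel_left, add_right_comm, pow_add _ (j + j), ← two_mul,
    pow_mul]
  simp

/-- The expansion `D_h(y) = Σⱼ Lⱼ(x) y⁽ʲ⁾` of the Ward derivative, tested on `y = xⁿ`. -/
def ShefferRecurrence {K : Type*} [CommRing K] (h : ℕ → K) (L : ℕ → PowerSeries K) : Prop :=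
  ∀ n : ℕ, 1 ≤ n →
    h n • (X ^ (n - 1) : PowerSeries K) =
      ∑ j ∈ Icc 1 n, ((n.choose j * j.factorial : ℕ) : K) • (L j * X ^ (n - j))

namespace ShefferRecurrence

theorem factorial_smul_eq {K : Type*} [CommRing K] {h : ℕ → K} {L : ℕ → PowerSeries K}
    (hL : ShefferRecurrence h L) {n : ℕ} (hn : 1 ≤ n) :
    (n.factorial : K) • L n = h n • (X ^ (n - 1) : PowerSeries K) -
      ∑ j ∈ Ico 1 n, ((n.choose j * j.factorial : ℕ) : K) • (L j * X ^ (n - j)) := by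
  rw [hL n hn, ← Ico_insert_right hn, sum_insert right_notMem_Ico]
  simp

variable {K : Type*} [Field K] [CharZero K] {h : ℕ → K} {L L' : ℕ → PowerSeries K}

theorem unique (hL : ShefferRecurrence h L) (hL' : ShefferRecurrence h L') :
    ∀ k, 1 ≤ k → L k = L' k := by
  intro k
  induction k using Nat.strong_induction_on with
  | _ k ih =>
    intro hk
    have hsmul : (k.factorial : K) • L k = (k.factorial : K) • L' k := by
      rw [hL.factorial_smul_eq hk, hL'.factorial_smul_eq hk]
      congr 1
      refine sum_congr rfl fun j hj => ?_
      rw [ih j (mem_Ico.mp hj).2 (mem_Ico.mp hj).1]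
    exact smul_right_injective _ (Nat.cast_ne_zero.mpr k.factorial_ne_zero) hsmul

theorem of_fwdDiff (h0 : h 0 = 0) :
    ShefferRecurrence h fun k => (k.factorial : K)⁻¹ • ((fwdDiff 1)^[k] h 0 • X ^ (k - 1)) := by
  intro n hn
  have hterm : ∀ j ∈ Icc 1 n, ((n.choose j * j.factorial : ℕ) : K) •
      ((j.factorial : K)⁻¹ • ((fwdDiff 1)^[j] h 0 • X ^ (j - 1)) * X ^ (n - j)) =
        ((n.choose j : K) * (fwdDiff 1)^[j] h 0) • (X ^ (n - 1) : PowerSeries K) := by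
    intro j hj
    obtain ⟨hj1, hjn⟩ := mem_Icc.mp hj
    rw [smul_mul_assoc, smul_mul_assoc, ← pow_add, show j - 1 + (n - j) = n - 1 by omega,
      smul_smul, smul_smul]
    congr 1
    push_cast
    have hfac : (j.factorial : K) ≠ 0 := Nat.cast_ne_zero.mpr j.factorial_ne_zero
    field_simp
  rw [sum_congr rfl hterm, ← sum_smul]
  congr 1
  have hnewton := shift_eq_sum_fwdDiff_iter 1 h n 0
  rw [range_eq_Ico, sum_eq_sum_Ico_succ_bot n.succ_pos] at hnewton
  simpa [h0, Ico_add_one_right_eq_Icc] using hnewton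

end ShefferRecurrence

theorem sheffer_coefficients_general {K : Type*} [Field K] [CharZero K]
    (h : ℕ → K) (h0 : h 0 = 0)
    (L : ℕ → PowerSeries K)
    (hL : ∀ n : ℕ, 1 ≤ n →
      (h n) • (PowerSeries.X ^ (n - 1) : PowerSeries K) =
        ∑ j ∈ Finset.Icc 1 n,
          ((n.choose j * j.factorial : ℕ) : K) • (L j * PowerSeries.X ^ (n - j))) :
    ∀ k : ℕ, 1 ≤ k →
      L k = ((k.factorial : K))⁻¹ •
        ((∑ j ∈ Finset.range (k + 1), (-1 : K) ^ (k + j) * (k.choose j : K) * h j) •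
          (PowerSeries.X ^ (k - 1) : PowerSeries K)) := by
  intro k hk
  rw [← fwdDiff_iter_eq_sum_neg_one_pow_add]
  exact ShefferRecurrence.unique hL (.of_fwdDiff h0) k hk

/-- **Sheffer expansion coefficients for Ward derivatives.**
Let `h = Σ_{k≥1} hₖxᵏ` with `h₀ = 0` and `hₖ ≠ 0` for `k ≥ 1`, and let the `Lₖ` be
the Sheffer coefficients of `D_h`, i.e. the (unique) power series such that
`D_h(y) = Σ_{j≥1} Lⱼ(x) y⁽ʲ⁾`; equivalently, evaluating on `y = xⁿ`, the `Lⱼ`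
satisfy `hₙ x^{n-1} = Σ_{j=1}^{n} C(n,j) j! Lⱼ(x) x^{n-j}` for all `n ≥ 1`.
Then `Lₖ(x) = (x^{k-1}/k!) Σ_{j=0}^{k} (-1)^{k+j} C(k,j) hⱼ` for all `k ≥ 1`. -/
theorem sheffer_coefficients {K : Type*} [Field K] [CharZero K]
    (h : ℕ → K) (h0 : h 0 = 0) (hne : ∀ k : ℕ, 1 ≤ k → h k ≠ 0)
    (L : ℕ → PowerSeries K)
    (hL : ∀ n : ℕ, 1 ≤ n →
      (h n) • (PowerSeries.X ^ (n - 1) : PowerSeries K) =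
        ∑ j ∈ Finset.Icc 1 n,
          ((n.choose j * j.factorial : ℕ) : K) • (L j * PowerSeries.X ^ (n - j))) :
    ∀ k : ℕ, 1 ≤ k →
      L k = ((k.factorial : K))⁻¹ •
        ((∑ j ∈ Finset.range (k + 1), (-1 : K) ^ (k + j) * (k.choose j : K) * h j) •
          (PowerSeries.X ^ (k - 1) : PowerSeries K)) :=
  sheffer_coefficients_general h h0 L hL
end
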